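/- arXiv:2512.17398 — 2 statements merged into one kernel-verified Lean document; each statement's English description precedes it below -/
import Mathlib

section
/- No function of the form f(x) = a·ReLU(wᵀx + b) + vᵀx + c on ℝ² satisfies: f(x1, x2) > 0 if and only if sign(x1) ≠ sign(x2), for all (x1, x2) with x1 ≠ 0 and x2 ≠ 0. That is, a single-hidden-layer SNL model with one ReLU neuron cannot represent the 2×2 checkerboard function. -/
theorem snl_cannot_solve_xor :
    ¬ ∃ (w v : ℝ × ℝ) (a b c : ℝ),
      ∀ x1 x2 : ℝ, x1 ≠ 0 → x2 ≠ 0 →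
        (a * max (w.1 * x1 + w.2 * x2 + b) 0 + (v.1 * x1 + v.2 * x2) + c > 0 ↔
          Real.sign x1 ≠ Real.sign x2) := by
  rintro ⟨w, v, a, b, c, h⟩
  -- choose same-sign point (p1,p2) (both positive) and opposite-sign point (q1,q2)
  -- (q1>0, q2<0) with w·p = ±(w·q)
  obtain ⟨p1, p2, q1, q2, hp1, hp2, hq1, hq2, hkey⟩ :
      ∃ p1 p2 q1 q2 : ℝ, 0 < p1 ∧ 0 < p2 ∧ 0 < q1 ∧ q2 < 0 ∧
        (w.1 * p1 + w.2 * p2 = w.1 * q1 + w.2 * q2 ∨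
         w.1 * p1 + w.2 * p2 = -(w.1 * q1 + w.2 * q2)) := by
    by_cases hw1 : w.1 = 0
    · exact ⟨1, 1, 1, -1, one_pos, one_pos, one_pos, by norm_num, Or.inr (by rw [hw1]; ring)⟩
    by_cases hw2 : w.2 = 0
    · exact ⟨1, 1, 1, -1, one_pos, one_pos, one_pos, by norm_num, Or.inl (by rw [hw2]; ring)⟩
    refine ⟨1 + 2 * |w.2 / w.1| - 2 * (w.2 / w.1), 1, 1 + 2 * |w.2 / w.1|, -1,
      ?_, one_pos, ?_, by norm_num, Or.inl ?_⟩
    · have := le_abs_self (w.2 / w.1); linarith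
    · positivity
    · field_simp
      ring
  -- extract the four inequalities
  have neg_ne : ∀ x : ℝ, x ≠ 0 → -x ≠ 0 := fun x hx => neg_ne_zero.mpr hx
  have hsame : ∀ x1 x2 : ℝ, 0 < x1 → 0 < x2 →
      a * max (w.1 * x1 + w.2 * x2 + b) 0 + (v.1 * x1 + v.2 * x2) + c ≤ 0 := by
    intro x1 x2 hx1 hx2
    by_contra hgt
    push_neg at hgt
    exact ((h x1 x2 hx1.ne' hx2.ne').mp hgt)
      (by rw [Real.sign_of_pos hx1, Real.sign_of_pos hx2])
  have hsame' : ∀ x1 x2 : ℝ, x1 < 0 → x2 < 0 →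
      a * max (w.1 * x1 + w.2 * x2 + b) 0 + (v.1 * x1 + v.2 * x2) + c ≤ 0 := by
    intro x1 x2 hx1 hx2
    by_contra hgt
    push_neg at hgt
    exact ((h x1 x2 hx1.ne hx2.ne).mp hgt)
      (by rw [Real.sign_of_neg hx1, Real.sign_of_neg hx2])
  have hdiff : ∀ x1 x2 : ℝ, 0 < x1 → x2 < 0 →
      0 < a * max (w.1 * x1 + w.2 * x2 + b) 0 + (v.1 * x1 + v.2 * x2) + c := by
    intro x1 x2 hx1 hx2
    exact (h x1 x2 hx1.ne' hx2.ne).mpr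
      (by rw [Real.sign_of_pos hx1, Real.sign_of_neg hx2]; norm_num)
  have hdiff' : ∀ x1 x2 : ℝ, x1 < 0 → 0 < x2 →
      0 < a * max (w.1 * x1 + w.2 * x2 + b) 0 + (v.1 * x1 + v.2 * x2) + c := by
    intro x1 x2 hx1 hx2
    exact (h x1 x2 hx1.ne hx2.ne').mpr
      (by rw [Real.sign_of_neg hx1, Real.sign_of_pos hx2]; norm_num)
  have S1 := hsame p1 p2 hp1 hp2
  have S2 := hsame' (-p1) (-p2) (by linarith) (by linarith)
  have S3 := hdiff q1 q2 hq1 hq2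
  have S4 := hdiff' (-q1) (-q2) (by linarith) (by linarith)
  set u : ℝ := w.1 * p1 + w.2 * p2 with hu
  set u' : ℝ := w.1 * q1 + w.2 * q2 with hu'
  rw [show w.1 * -p1 + w.2 * -p2 + b = -u + b by rw [hu]; ring] at S2
  rw [show w.1 * -q1 + w.2 * -q2 + b = -u' + b by rw [hu']; ring] at S4
  rw [show w.1 * p1 + w.2 * p2 + b = u + b from rfl] at S1
  rw [show w.1 * q1 + w.2 * q2 + b = u' + b from rfl] at S3
  rcases hkey with hk | hk
  · rw [hk] at S1 S2
    linarith
  · rw [hk] at S1 S2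
    rw [neg_neg] at S2
    linarith
end

section
/- Let f(x) = a·ReLU(wᵀx + b) + vᵀx + c on ℝ², and suppose a·w ≠ 0 (so the two affine pieces differ). If v and v + a·w are both nonzero and not parallel, and both lines L⁻ = {vᵀx + c = 0} and L⁺ = {(v + a·w)ᵀx + (c + a·b) = 0} intersect the hyperplane H = {wᵀx + b = 0}, then L⁻ ∩ H = L⁺ ∩ H is a single point, and the zero set of f is the union of two half-lines (rays) emanating from that point. -/
lemma perp_aux (u1 u2 e1 e2 : ℝ) (hu : ¬(u1 = 0 ∧ u2 = 0)) (h : u1 * e1 + u2 * e2 = 0) :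
    ∃ t : ℝ, e1 = t * (-u2) ∧ e2 = t * u1 := by
  by_cases h1 : u1 = 0
  · have h2 : u2 ≠ 0 := fun h2 => hu ⟨h1, h2⟩
    have hd2 : e2 = 0 := by
      have : u2 * e2 = 0 := by rw [h1] at h; linarith
      exact (mul_eq_zero.1 this).resolve_left h2
    refine ⟨e1 / (-u2), by field_simp, by rw [hd2, h1, mul_zero]⟩
  · refine ⟨e2 / u1, ?_, by field_simp⟩
    field_simp
    linear_combination h

lemma mk_ne_aux (u : ℝ × ℝ) (h1 : u.1 = 0) (h2 : u.2 = 0) : u = 0 := by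
  ext <;> simp [h1, h2]

theorem snl_zero_set_two_rays (w v : ℝ × ℝ) (a b c : ℝ)
    (f : ℝ × ℝ → ℝ)
    (hf : ∀ x : ℝ × ℝ, f x = a * max (w.1 * x.1 + w.2 * x.2 + b) 0 + (v.1 * x.1 + v.2 * x.2) + c)
    (hw : w ≠ 0)
    (haw : a • w ≠ 0)
    (hv : v ≠ 0) (hvaw : v + a • w ≠ 0)
    (hnotpar : ¬ ∃ t : ℝ, v + a • w = t • v)
    (hLm : ({x : ℝ × ℝ | v.1 * x.1 + v.2 * x.2 + c = 0} ∩
            {x | w.1 * x.1 + w.2 * x.2 + b = 0}).Nonempty)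
    (hLp : ({x : ℝ × ℝ | (v.1 + a * w.1) * x.1 + (v.2 + a * w.2) * x.2 + (c + a * b) = 0} ∩
            {x | w.1 * x.1 + w.2 * x.2 + b = 0}).Nonempty) :
    ∃ p : ℝ × ℝ,
      ({x : ℝ × ℝ | v.1 * x.1 + v.2 * x.2 + c = 0} ∩
        {x | w.1 * x.1 + w.2 * x.2 + b = 0}) = {p} ∧
      ({x : ℝ × ℝ | (v.1 + a * w.1) * x.1 + (v.2 + a * w.2) * x.2 + (c + a * b) = 0} ∩
        {x | w.1 * x.1 + w.2 * x.2 + b = 0}) = {p} ∧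
      ∃ d1 d2 : ℝ × ℝ, d1 ≠ 0 ∧ d2 ≠ 0 ∧
        {x : ℝ × ℝ | f x = 0} =
          {x : ℝ × ℝ | ∃ t : ℝ, 0 ≤ t ∧ x = p + t • d1} ∪
          {x : ℝ × ℝ | ∃ t : ℝ, 0 ≤ t ∧ x = p + t • d2} := by
  obtain ⟨p, hpL, hpH⟩ := hLm
  simp only [Set.mem_setOf_eq] at hpL hpH
  have hvne : ¬(v.1 = 0 ∧ v.2 = 0) := by
    rintro ⟨h1, h2⟩; exact hv (mk_ne_aux v h1 h2)
  have hvawne : ¬(v.1 + a * w.1 = 0 ∧ v.2 + a * w.2 = 0) := by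
    rintro ⟨h1, h2⟩
    exact hvaw (mk_ne_aux _ (by simpa using h1) (by simpa using h2))
  set D : ℝ := v.1 * w.2 - v.2 * w.1 with hDdef
  have hDne : D ≠ 0 := by
    intro h0
    obtain ⟨t, ht1, ht2⟩ := perp_aux v.2 (-v.1) (a * w.1) (a * w.2)
      (by rintro ⟨h1, h2⟩; exact hvne ⟨by linarith, h1⟩)
      (by linear_combination (-a) * h0)
    refine hnotpar ⟨1 + t, Prod.ext_iff.mpr ⟨?_, ?_⟩⟩
    · simp only [Prod.fst_add, Prod.smul_fst, smul_eq_mul]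
      nlinarith [ht1]
    · simp only [Prod.snd_add, Prod.smul_snd, smul_eq_mul]
      nlinarith [ht2]
  have hpL' : (v.1 + a * w.1) * p.1 + (v.2 + a * w.2) * p.2 + (c + a * b) = 0 := by
    linear_combination hpL + a * hpH
  have key : ∀ x : ℝ × ℝ, v.1 * x.1 + v.2 * x.2 + c = 0 →
      w.1 * x.1 + w.2 * x.2 + b = 0 → x = p := by
    intro x h1 h2
    have e1 : (x.1 - p.1) * D = 0 := by
      linear_combination w.2 * h1 - w.2 * hpL - v.2 * h2 + v.2 * hpH
    have e2 : (x.2 - p.2) * D = 0 := by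
      linear_combination (-w.1) * h1 + w.1 * hpL + v.1 * h2 - v.1 * hpH
    have q1 : x.1 = p.1 := by
      have := (mul_eq_zero.1 e1).resolve_right hDne; linarith
    have q2 : x.2 = p.2 := by
      have := (mul_eq_zero.1 e2).resolve_right hDne; linarith
    exact Prod.ext q1 q2
  have key' : ∀ x : ℝ × ℝ, (v.1 + a * w.1) * x.1 + (v.2 + a * w.2) * x.2 + (c + a * b) = 0 →
      w.1 * x.1 + w.2 * x.2 + b = 0 → x = p := by
    intro x h1 h2
    exact key x (by linear_combination h1 - a * h2) h2
  refine ⟨p, ?_, ?_, ?_⟩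
  · ext x
    simp only [Set.mem_inter_iff, Set.mem_setOf_eq, Set.mem_singleton_iff]
    constructor
    · rintro ⟨h1, h2⟩; exact key x h1 h2
    · rintro rfl; exact ⟨hpL, hpH⟩
  · ext x
    simp only [Set.mem_inter_iff, Set.mem_setOf_eq, Set.mem_singleton_iff]
    constructor
    · rintro ⟨h1, h2⟩; exact key' x h1 h2
    · rintro rfl; exact ⟨hpL', hpH⟩
  · obtain ⟨s, hs2, hsD⟩ : ∃ s : ℝ, s * s = 1 ∧ s * D < 0 := by
      rcases lt_or_gt_of_ne hDne with h | h
      · exact ⟨1, by norm_num, by linarith⟩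
      · exact ⟨-1, by norm_num, by linarith⟩
    have hs : s ≠ 0 := by intro h; rw [h] at hs2; norm_num at hs2
    refine ⟨(s * (-v.2), s * v.1), ((-s) * (-(v.2 + a * w.2)), (-s) * (v.1 + a * w.1)),
      ?_, ?_, ?_⟩
    · intro h
      rw [Prod.ext_iff] at h
      simp only [Prod.fst_zero, Prod.snd_zero] at h
      have h1 : v.2 = 0 := by
        rcases mul_eq_zero.1 h.1 with h' | h'
        · exact absurd h' hs
        · linarith
      have h2 : v.1 = 0 := (mul_eq_zero.1 h.2).resolve_left hs
      exact hvne ⟨h2, h1⟩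
    · intro h
      rw [Prod.ext_iff] at h
      simp only [Prod.fst_zero, Prod.snd_zero] at h
      have hns : -s ≠ 0 := neg_ne_zero.mpr hs
      have h1 : v.2 + a * w.2 = 0 := by
        rcases mul_eq_zero.1 h.1 with h' | h'
        · exact absurd h' hns
        · linarith
      have h2 : v.1 + a * w.1 = 0 := (mul_eq_zero.1 h.2).resolve_left hns
      exact hvawne ⟨h2, h1⟩
    · ext x
      simp only [Set.mem_setOf_eq, Set.mem_union, hf x, Prod.ext_iff, Prod.fst_add,
        Prod.snd_add, Prod.smul_mk, smul_eq_mul]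
      constructor
      · intro hfx
        rcases le_or_gt (w.1 * x.1 + w.2 * x.2 + b) 0 with hside | hside
        · rw [max_eq_right hside] at hfx
          have hxL : v.1 * x.1 + v.2 * x.2 + c = 0 := by linarith
          obtain ⟨t', ht1, ht2⟩ := perp_aux v.1 v.2 (x.1 - p.1) (x.2 - p.2) hvne
            (by linear_combination hxL - hpL)
          have hwx : w.1 * x.1 + w.2 * x.2 + b = t' * D := by
            linear_combination w.1 * ht1 + w.2 * ht2 + hpH
          refine Or.inl ⟨s * t', ?_, ?_, ?_⟩
          · by_contra h
            push_neg at h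
            have e : t' * D = (s * t') * (s * D) := by linear_combination (-(t' * D)) * hs2
            have hpos : 0 < (s * t') * (s * D) := mul_pos_of_neg_of_neg h hsD
            linarith
          · linear_combination ht1 + (t' * v.2) * hs2
          · linear_combination ht2 - (t' * v.1) * hs2
        · rw [max_eq_left (le_of_lt hside)] at hfx
          have hxL : (v.1 + a * w.1) * x.1 + (v.2 + a * w.2) * x.2 + (c + a * b) = 0 := by
            linarith
          obtain ⟨t', ht1, ht2⟩ := perp_aux (v.1 + a * w.1) (v.2 + a * w.2)
            (x.1 - p.1) (x.2 - p.2) hvawne (by linear_combination hxL - hpL')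
          have hwx : w.1 * x.1 + w.2 * x.2 + b = t' * D := by
            linear_combination w.1 * ht1 + w.2 * ht2 + hpH
          refine Or.inr ⟨(-s) * t', ?_, ?_, ?_⟩
          · by_contra h
            push_neg at h
            have e : t' * D = ((-s) * t') * ((-s) * D) := by
              linear_combination (-(t' * D)) * hs2
            have hneg : ((-s) * t') * ((-s) * D) < 0 :=
              mul_neg_of_neg_of_pos h (by nlinarith)
            linarith
          · linear_combination ht1 + (t' * (v.2 + a * w.2)) * hs2
          · linear_combination ht2 - (t' * (v.1 + a * w.1)) * hs2
      · rintro (⟨t, ht, hx1, hx2⟩ | ⟨t, ht, hx1, hx2⟩)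
        · have hwx : w.1 * x.1 + w.2 * x.2 + b = t * (s * D) := by
            rw [hx1, hx2]; linear_combination hpH
          have hle : w.1 * x.1 + w.2 * x.2 + b ≤ 0 := by
            rw [hwx]; nlinarith
          rw [max_eq_right hle, hx1, hx2]
          linear_combination hpL
        · have hwx : w.1 * x.1 + w.2 * x.2 + b = t * ((-s) * D) := by
            rw [hx1, hx2]; linear_combination hpH
          have hge : 0 ≤ w.1 * x.1 + w.2 * x.2 + b := by
            rw [hwx]; nlinarith
          rw [max_eq_left hge, hx1, hx2]
          linear_combination hpL'
end
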